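/- arXiv:math/0311045 — 2 statements merged into one kernel-verified Lean document; each statement's English description precedes it below -/
import Mathlib

section
/- (Lopsided Lovász local lemma, Erdős–Spencer form) Let H_1, …, H_n be events in a probability space. Suppose there exist a directed graph G on vertex set {1,…,n} and constants r_1,…,r_n ∈ [0,1) such that for every i and every Y ⊆ {1,…,n} \ N̄(i), we have P(H_i | ⋂_{j∈Y} H_j^c) ≤ r_i ∏_{j ∈ N̄(i)} (1 − r_j) whenever the conditioning event has positive probability. Then P(⋂_{i=1}^n H_i^c) ≥ ∏_{i=1}^n (1 − r_i) > 0. -/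
open Finset MeasureTheory
open scoped ENNReal

/-- The closed out-neighborhood `N̄(i) = {i} ∪ {j : (i,j) ∈ E}` of `i` in the
directed graph with edge relation `E` on `Fin n`. -/
def closedNbhd {n : ℕ} (E : Fin n → Fin n → Prop) [DecidableRel E] (i : Fin n) :
    Finset (Fin n) :=
  insert i (Finset.univ.filter (E i))

/-!
Write `A_S = ⋂_{j ∈ S} H_jᶜ`. By strong induction on `S`, `P(H_i ∩ A_S) ≤ r_i P(A_S)` for all `i`:
split `S` into `Near = S ∩ N̄(i)` and `Far = S \ N̄(i)`. The hypothesis gives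
`P(H_i ∩ A_Far) ≤ r_i ∏_{N̄(i)} (1 - r_j) P(A_Far)`, while adding the events of `Near` to `Far` one
at a time, each time using the induction hypothesis on a proper subset of `S` together with
`P(Hᶜ ∩ A) ≥ (1 - r) P(A)` whenever `P(H ∩ A) ≤ r P(A)`, gives
`P(A_S) ≥ ∏_{Near} (1 - r_j) P(A_Far) ≥ ∏_{N̄(i)} (1 - r_j) P(A_Far)`. Adding all events one at a
time in the same way gives `P(A_[n]) ≥ ∏ (1 - r_i)`.
-/

namespace LovaszLocalLemma

variable {Ω ι : Type*} {H : ι → Set Ω}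

def avoid (H : ι → Set Ω) (S : Finset ι) : Set Ω := ⋂ j ∈ S, (H j)ᶜ

@[simp] lemma avoid_empty : avoid H ∅ = Set.univ := by simp [avoid]

lemma avoid_anti : Antitone (avoid H) := fun _ _ hST =>
  Set.biInter_subset_biInter_left (by exact_mod_cast hST)

variable [DecidableEq ι]

lemma avoid_insert (a : ι) (S : Finset ι) : avoid H (insert a S) = (H a)ᶜ ∩ avoid H S := by
  simp [avoid]

lemma avoid_union (S T : Finset ι) : avoid H (S ∪ T) = avoid H S ∩ avoid H T := by
  ext; simp [avoid, or_imp, forall_and]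

variable [MeasurableSpace Ω] {μ : Measure Ω} [IsFiniteMeasure μ]

lemma one_sub_mul_measure_le_measure_compl_inter {A B : Set Ω} {p : ℝ≥0∞}
    (h : μ (B ∩ A) ≤ p * μ A) : (1 - p) * μ A ≤ μ (Bᶜ ∩ A) := by
  rw [ENNReal.sub_mul fun _ _ => measure_ne_top μ A, one_mul, tsub_le_iff_right]
  calc μ A ≤ μ (A ∩ Bᶜ) + μ (A \ Bᶜ) := measure_le_inter_add_sdiff μ A Bᶜ
    _ = μ (Bᶜ ∩ A) + μ (B ∩ A) := by rw [Set.sdiff_compl, Set.inter_comm A, Set.inter_comm A]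
    _ ≤ μ (Bᶜ ∩ A) + p * μ A := by gcongr

lemma prod_one_sub_mul_le_measure_avoid_inter (p : ι → ℝ≥0∞) (B : Set Ω) (S : Finset ι)
    (hstep : ∀ a ∈ S, ∀ T ⊆ S.erase a, μ (H a ∩ (avoid H T ∩ B)) ≤ p a * μ (avoid H T ∩ B)) :
    (∏ j ∈ S, (1 - p j)) * μ B ≤ μ (avoid H S ∩ B) := by
  induction S using Finset.induction_on with
  | empty => simp
  | insert a S ha ih =>
    have ih' := ih fun b hb T hT =>
      hstep b (mem_insert_of_mem hb) T (hT.trans (erase_subset_erase b (subset_insert a S)))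
    calc (∏ j ∈ insert a S, (1 - p j)) * μ B = (1 - p a) * ((∏ j ∈ S, (1 - p j)) * μ B) := by
          rw [prod_insert ha, mul_assoc]
      _ ≤ (1 - p a) * μ (avoid H S ∩ B) := by gcongr
      _ ≤ μ ((H a)ᶜ ∩ (avoid H S ∩ B)) :=
          one_sub_mul_measure_le_measure_compl_inter
            (hstep a (mem_insert_self a S) S (by rw [erase_insert ha]))
      _ = μ (avoid H (insert a S) ∩ B) := by rw [avoid_insert, Set.inter_assoc]

variable {N : ι → Finset ι} {p : ι → ℝ≥0∞}

lemma measure_inter_avoid_le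
    (hyp : ∀ i Y, Disjoint Y (N i) → 0 < μ (avoid H Y) →
      μ (H i ∩ avoid H Y) ≤ p i * (∏ j ∈ N i, (1 - p j)) * μ (avoid H Y))
    (S : Finset ι) (i : ι) : μ (H i ∩ avoid H S) ≤ p i * μ (avoid H S) := by
  induction S using Finset.strongInduction generalizing i with
  | H S ih =>
  set Far := S.filter (· ∉ N i)
  set Near := S.filter (· ∈ N i)
  have hS_Far : avoid H S ⊆ avoid H Far := avoid_anti (filter_subset _ S)
  rcases eq_zero_or_pos (μ (avoid H Far)) with hzero | hpos
  · exact (measure_mono_null (Set.inter_subset_right.trans hS_Far) hzero).trans_le zero_le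
  have hS : avoid H S = avoid H Near ∩ avoid H Far := by
    rw [← avoid_union, filter_union_filter_not_eq]
  have hNear : (∏ j ∈ Near, (1 - p j)) * μ (avoid H Far) ≤ μ (avoid H S) := by
    rw [hS]
    refine prod_one_sub_mul_le_measure_avoid_inter p _ Near fun a ha T hT => ?_
    rw [← avoid_union]
    have haS : a ∈ S := (filter_subset _ S) ha
    have hsub : T ∪ Far ⊆ S :=
      union_subset (hT.trans ((erase_subset a _).trans (filter_subset _ S))) (filter_subset _ S)
    refine ih _ ((ssubset_iff_of_subset hsub).mpr ⟨a, haS, ?_⟩) a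
    simp only [mem_union, not_or]
    exact ⟨fun h => (mem_erase.mp (hT h)).1 rfl, fun h => (mem_filter.mp h).2 (mem_filter.mp ha).2⟩
  calc μ (H i ∩ avoid H S) ≤ μ (H i ∩ avoid H Far) := by gcongr
    _ ≤ p i * (∏ j ∈ N i, (1 - p j)) * μ (avoid H Far) :=
        hyp i Far (disjoint_left.mpr fun _ hj => (mem_filter.mp hj).2) hpos
    _ ≤ p i * (∏ j ∈ Near, (1 - p j)) * μ (avoid H Far) := by
        gcongr p i * ?_ * _
        exact prod_le_prod_of_subset_of_le_one' (fun j hj => (mem_filter.mp hj).2)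
          fun j _ _ => tsub_le_self
    _ ≤ p i * μ (avoid H S) := by rw [mul_assoc]; gcongr

theorem prod_one_sub_mul_measure_univ_le_measure_avoid
    (hyp : ∀ i Y, Disjoint Y (N i) → 0 < μ (avoid H Y) →
      μ (H i ∩ avoid H Y) ≤ p i * (∏ j ∈ N i, (1 - p j)) * μ (avoid H Y))
    (S : Finset ι) : (∏ j ∈ S, (1 - p j)) * μ Set.univ ≤ μ (avoid H S) := by
  simpa using prod_one_sub_mul_le_measure_avoid_inter p Set.univ S fun a _ T _ => by
    simpa using measure_inter_avoid_le hyp T a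

end LovaszLocalLemma

open LovaszLocalLemma

theorem lopsided_lovasz_local_lemma_general {Ω : Type*} [MeasurableSpace Ω]
    (P : Measure Ω) [IsProbabilityMeasure P] (n : ℕ)
    (H : Fin n → Set Ω)
    (E : Fin n → Fin n → Prop) [DecidableRel E]
    (r : Fin n → ℝ) (hr0 : ∀ i, 0 ≤ r i) (hr1 : ∀ i, r i < 1)
    (hyp : ∀ i : Fin n, ∀ Y : Finset (Fin n), (∀ j ∈ Y, j ∉ closedNbhd E i) →
      0 < P (⋂ j ∈ Y, (H j)ᶜ) →
      P (H i ∩ ⋂ j ∈ Y, (H j)ᶜ) ≤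
        ENNReal.ofReal (r i * ∏ j ∈ closedNbhd E i, (1 - r j)) * P (⋂ j ∈ Y, (H j)ᶜ)) :
    ENNReal.ofReal (∏ i, (1 - r i)) ≤ P (⋂ i, (H i)ᶜ) ∧ 0 < P (⋂ i, (H i)ᶜ) := by
  have hq : ∀ i, ENNReal.ofReal (1 - r i) = 1 - ENNReal.ofReal (r i) := fun i => by
    rw [ENNReal.ofReal_sub 1 (hr0 i), ENNReal.ofReal_one]
  have hprod : ∀ S : Finset (Fin n),
      ENNReal.ofReal (∏ j ∈ S, (1 - r j)) = ∏ j ∈ S, (1 - ENNReal.ofReal (r j)) := fun S => by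
    rw [ENNReal.ofReal_prod_of_nonneg fun j _ => sub_nonneg.mpr (hr1 j).le]
    exact prod_congr rfl fun j _ => hq j
  have hbound := prod_one_sub_mul_measure_univ_le_measure_avoid (μ := P) (H := H)
    (N := closedNbhd E) (p := fun i => ENNReal.ofReal (r i))
    (fun i Y hY hpos => by
      have h := hyp i Y (disjoint_left.mp hY) hpos
      rwa [ENNReal.ofReal_mul (hr0 i), hprod] at h)
    univ
  have hlower : ENNReal.ofReal (∏ i, (1 - r i)) ≤ P (⋂ i, (H i)ᶜ) := by
    simpa [hprod, avoid] using hbound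
  exact ⟨hlower, (ENNReal.ofReal_pos.mpr (prod_pos fun i _ => sub_pos.mpr (hr1 i))).trans_le hlower⟩

/-- Lopsided Lovász local lemma (Erdős–Spencer form): if for each `i` and each
`Y ⊆ [n] \ N̄(i)` with `P(⋂_{j∈Y} H_jᶜ) > 0` we have
`P(H_i | ⋂_{j∈Y} H_jᶜ) ≤ r_i ∏_{j∈N̄(i)} (1 − r_j)`, then
`P(⋂ᵢ H_iᶜ) ≥ ∏ᵢ (1 − r_i) > 0`. -/
theorem lopsided_lovasz_local_lemma {Ω : Type*} [MeasurableSpace Ω]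
    (P : Measure Ω) [IsProbabilityMeasure P] (n : ℕ)
    (H : Fin n → Set Ω) (hH : ∀ i, MeasurableSet (H i))
    (E : Fin n → Fin n → Prop) [DecidableRel E]
    (r : Fin n → ℝ) (hr0 : ∀ i, 0 ≤ r i) (hr1 : ∀ i, r i < 1)
    (hyp : ∀ i : Fin n, ∀ Y : Finset (Fin n), (∀ j ∈ Y, j ∉ closedNbhd E i) →
      0 < P (⋂ j ∈ Y, (H j)ᶜ) →
      P (H i ∩ ⋂ j ∈ Y, (H j)ᶜ) ≤
        ENNReal.ofReal (r i * ∏ j ∈ closedNbhd E i, (1 - r j)) * P (⋂ j ∈ Y, (H j)ᶜ)) :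
    ENNReal.ofReal (∏ i, (1 - r i)) ≤ P (⋂ i, (H i)ᶜ) ∧ 0 < P (⋂ i, (H i)ᶜ) :=
  lopsided_lovasz_local_lemma_general P n H E r hr0 hr1 hyp
end

section
/- Let G = (V,E) be a finite acyclic digraph with n vertices and 0 ≤ ε < 1. Then the minimum over all ε-admissible probability measures μ on {0,1}^V of μ(⋂_{i∈V} A_i^c) equals (1−ε)^n. That is: (a) every ε-admissible μ satisfies μ(no vertex fails) ≥ (1−ε)^n, and (b) the product Bernoulli measure with parameter ε is ε-admissible and attains this bound. -/
open Finset

open Classical in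
/-- Probability of the event `P` under the (finitely supported) measure `μ`. -/
noncomputable def Pr {Ω : Type*} [Fintype Ω] (μ : Ω → ℝ) (P : Ω → Prop) : ℝ :=
  ∑ ω : Ω, if P ω then μ ω else 0

/-- `μ` is ε-admissible: for every gate `i` and all disjoint `Y, Y' ⊆ V \ Γ*(i)`
with positive-probability conditioning event, `μ(A_i | ⋂_{j∈Y} A_j ∩ ⋂_{j∈Y'} A_jᶜ) ≤ ε`. -/
def IsAdmissible {V : Type*} [Fintype V] [DecidableEq V] (E : V → V → Prop) (ε : ℝ)
    (μ : (V → Bool) → ℝ) : Prop :=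
  ∀ i : V, ∀ Y Y' : Finset V, Disjoint Y Y' →
    (∀ j ∈ Y, ¬ Relation.ReflTransGen E i j) →
    (∀ j ∈ Y', ¬ Relation.ReflTransGen E i j) →
    0 < Pr μ (fun ω => (∀ j ∈ Y, ω j = true) ∧ (∀ j ∈ Y', ω j = false)) →
    Pr μ (fun ω => ω i = true ∧ (∀ j ∈ Y, ω j = true) ∧ (∀ j ∈ Y', ω j = false)) ≤
      ε * Pr μ (fun ω => (∀ j ∈ Y, ω j = true) ∧ (∀ j ∈ Y', ω j = false))

/-- The product Bernoulli measure with parameter `ε` (each coordinate is `1`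
independently with probability `ε`). -/
noncomputable def bernoulliProd {V : Type*} [Fintype V] (ε : ℝ) (ω : V → Bool) : ℝ :=
  ∏ i : V, if ω i then ε else 1 - ε

open Classical in
lemma Pr_congr {Ω : Type*} [Fintype Ω] (μ : Ω → ℝ) {P Q : Ω → Prop}
    (h : ∀ ω, P ω ↔ Q ω) : Pr μ P = Pr μ Q := by
  unfold Pr; exact Finset.sum_congr rfl fun ω _ => by by_cases hp : P ω <;> simp [hp, (h ω).symm]

open Classical in
lemma Pr_split {V : Type*} [Fintype V] [DecidableEq V] (μ : (V → Bool) → ℝ) (P : (V → Bool) → Prop) (i : V) :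
    Pr μ P = Pr μ (fun ω => ω i = true ∧ P ω) + Pr μ (fun ω => ω i = false ∧ P ω) := by
  unfold Pr
  rw [← Finset.sum_add_distrib]
  refine Finset.sum_congr rfl fun ω _ => ?_
  by_cases hp : P ω <;> cases h : ω i <;> simp [hp, h]

open Classical in
lemma bern_cyl {V : Type*} [Fintype V] [DecidableEq V] (ε : ℝ) (Y Y' : Finset V)
    (hd : Disjoint Y Y') :
    Pr (bernoulliProd (V := V) ε) (fun ω => (∀ j ∈ Y, ω j = true) ∧ (∀ j ∈ Y', ω j = false)) =
      ε ^ Y.card * (1 - ε) ^ Y'.card := by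
  classical
  set g : V → Bool → ℝ := fun i b =>
    if i ∈ Y then (if b then ε else 0)
    else if i ∈ Y' then (if b then 0 else 1 - ε)
    else (if b then ε else 1 - ε) with hg
  have key : ∀ (ω : V → Bool) (inst : Decidable ((∀ j ∈ Y, ω j = true) ∧ (∀ j ∈ Y', ω j = false))),
      (@ite ℝ ((∀ j ∈ Y, ω j = true) ∧ (∀ j ∈ Y', ω j = false)) inst (bernoulliProd ε ω) 0)
        = ∏ i : V, g i (ω i) := by
    intro ω inst
    by_cases hP : (∀ j ∈ Y, ω j = true) ∧ (∀ j ∈ Y', ω j = false)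
    · rw [if_pos hP]
      refine Finset.prod_congr rfl fun i _ => ?_
      by_cases h1 : i ∈ Y
      · simp [g, h1, hP.1 i h1]
      · by_cases h2 : i ∈ Y'
        · simp [g, h1, h2, hP.2 i h2]
        · simp [g, h1, h2]
    · rw [if_neg hP]
      push_neg at hP
      by_cases h1 : ∀ j ∈ Y, ω j = true
      · obtain ⟨j, hj, hje⟩ := hP h1
        refine (Finset.prod_eq_zero (Finset.mem_univ j) ?_).symm
        have : ω j = true := by simpa using hje
        simp [g, Finset.disjoint_right.mp hd hj, hj, this]
      · push_neg at h1
        obtain ⟨j, hj, hje⟩ := h1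
        refine (Finset.prod_eq_zero (Finset.mem_univ j) ?_).symm
        have : ω j = false := by simpa using hje
        simp [g, hj, this]
  rw [Pr]
  refine Eq.trans (Finset.sum_congr rfl fun ω _ => key ω _) ?_
  rw [← Fintype.prod_sum g]
  have : ∀ i : V, (∑ b : Bool, g i b) = if i ∈ Y then ε else if i ∈ Y' then 1 - ε else 1 := by
    intro i
    by_cases h1 : i ∈ Y
    · simp [g, h1]
    · by_cases h2 : i ∈ Y' <;> simp [g, h1, h2]
  refine Eq.trans (Finset.prod_congr rfl fun i _ => this i) ?_
  have h1 : ∏ i ∈ Y, (if i ∈ Y then ε else if i ∈ Y' then 1 - ε else 1) = ε ^ Y.card := by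
    rw [← Finset.prod_const]; exact Finset.prod_congr rfl fun i hi => by simp [hi]
  have h2 : ∏ i ∈ Y', (if i ∈ Y then ε else if i ∈ Y' then 1 - ε else 1) = (1 - ε) ^ Y'.card := by
    rw [← Finset.prod_const]
    exact Finset.prod_congr rfl fun i hi => by simp [hi, Finset.disjoint_right.mp hd hi]
  rw [← Finset.prod_subset (Finset.subset_univ (Y ∪ Y'))
    (by intro x _ hx; simp only [Finset.mem_union, not_or] at hx; simp [hx.1, hx.2]),
    Finset.prod_union hd, h1, h2]

set_option maxHeartbeats 1000000 in
open Classical in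
/-- Main inductive lower bound for admissible measures. -/
lemma admissible_lower_bound {V : Type*} [Fintype V] [DecidableEq V]
    (E : V → V → Prop) (hacyclic : ∀ i : V, ¬ Relation.TransGen E i i)
    (ε : ℝ) (hε1 : ε < 1) (μ : (V → Bool) → ℝ)
    (hsum : ∑ ω, μ ω = 1) (hadm : IsAdmissible E ε μ) (S : Finset V) :
    (1 - ε) ^ S.card ≤ Pr μ (fun ω => ∀ j ∈ S, ω j = false) := by
  classical
  induction S using Finset.strongInduction with
  | _ S ih =>
    rcases S.eq_empty_or_nonempty with rfl | hS
    · simp [Pr, hsum]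
    · -- find a maximal element i of S w.r.t. reachability
      haveI : IsTrans V (fun a b => Relation.TransGen E b a) :=
        ⟨fun a b c h1 h2 => Relation.TransGen.trans h2 h1⟩
      haveI : IsIrrefl V (fun a b => Relation.TransGen E b a) := ⟨fun a => hacyclic a⟩
      obtain ⟨i, hiS, hmax⟩ := (Finite.wellFounded_of_trans_of_irrefl
        (fun a b : V => Relation.TransGen E b a)).has_min ↑S
        (by exact_mod_cast hS)
      have hmax' : ∀ j ∈ S, ¬ Relation.TransGen E i j := fun j hj h => hmax j hj h
      set Y' := S.erase i with hY'
      have hss : Y' ⊂ S := Finset.erase_ssubset hiS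
      have hcard : Y'.card + 1 = S.card := Finset.card_erase_add_one hiS
      have hIH := ih Y' hss
      have hQpos : 0 < Pr μ (fun ω => ∀ j ∈ Y', ω j = false) :=
        lt_of_lt_of_le (pow_pos (by linarith) _) hIH
      have hreach : ∀ j ∈ Y', ¬ Relation.ReflTransGen E i j := by
        intro j hj h
        rcases Relation.reflTransGen_iff_eq_or_transGen.mp h with rfl | h
        · exact (Finset.mem_erase.mp hj).1 rfl
        · exact hmax' j (Finset.mem_of_mem_erase hj) h
      have hadm' := hadm i ∅ Y' (Finset.disjoint_empty_left _) (by simp) hreach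
      have e1 : Pr μ (fun ω => (∀ j ∈ (∅ : Finset V), ω j = true) ∧ (∀ j ∈ Y', ω j = false)) =
          Pr μ (fun ω => ∀ j ∈ Y', ω j = false) := Pr_congr μ (by simp)
      have e2 : Pr μ (fun ω => ω i = true ∧ (∀ j ∈ (∅ : Finset V), ω j = true) ∧
          (∀ j ∈ Y', ω j = false)) =
          Pr μ (fun ω => ω i = true ∧ ∀ j ∈ Y', ω j = false) := Pr_congr μ (by simp)
      rw [e1, e2] at hadm'
      have hcond := hadm' hQpos
      have hsplit := Pr_split μ (fun ω => ∀ j ∈ Y', ω j = false) i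
      beta_reduce at hsplit
      have etarget : Pr μ (fun ω => ∀ j ∈ S, ω j = false) =
          Pr μ (fun ω => ω i = false ∧ ∀ j ∈ Y', ω j = false) := by
        refine Pr_congr μ fun ω => ?_
        constructor
        · intro h
          exact ⟨h i hiS, fun j hj => h j (Finset.mem_of_mem_erase hj)⟩
        · rintro ⟨h1, h2⟩ j hj
          rcases eq_or_ne j i with rfl | hne
          · exact h1
          · exact h2 j (Finset.mem_erase.mpr ⟨hne, hj⟩)
      have : (1 - ε) * Pr μ (fun ω => ∀ j ∈ Y', ω j = false) ≤
          Pr μ (fun ω => ω i = false ∧ ∀ j ∈ Y', ω j = false) := by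
        have key : ∀ a b c : ℝ, a ≤ ε * c → c = a + b → (1 - ε) * c ≤ b := by
          intro a b c h1 h2; nlinarith
        exact key _ _ _ hcond hsplit
      calc (1 - ε) ^ S.card = (1 - ε) * (1 - ε) ^ Y'.card := by rw [← hcard]; ring
        _ ≤ (1 - ε) * Pr μ (fun ω => ∀ j ∈ Y', ω j = false) := by
            have h1ε : (0 : ℝ) ≤ 1 - ε := by linarith
            exact mul_le_mul_of_nonneg_left hIH h1ε
        _ ≤ Pr μ (fun ω => ω i = false ∧ ∀ j ∈ Y', ω j = false) := this
        _ = Pr μ (fun ω => ∀ j ∈ S, ω j = false) := etarget.symm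

/-- For a finite acyclic digraph `G` on `n` vertices and `0 ≤ ε < 1`, the minimum
over ε-admissible probability measures of the probability that no vertex fails is
exactly `(1−ε)^n`: every ε-admissible `μ` satisfies
`μ(⋂ᵢ A_iᶜ) ≥ (1−ε)^n`, and the Bernoulli product measure `π_ε` is an
ε-admissible probability measure attaining this bound. -/
theorem min_failureFree_admissible {V : Type*} [Fintype V] [DecidableEq V]
    (E : V → V → Prop) (hacyclic : ∀ i : V, ¬ Relation.TransGen E i i)
    (ε : ℝ) (hε0 : 0 ≤ ε) (hε1 : ε < 1) :
    (∀ μ : (V → Bool) → ℝ, (∀ ω, 0 ≤ μ ω) → ∑ ω, μ ω = 1 → IsAdmissible E ε μ →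
      (1 - ε) ^ Fintype.card V ≤ Pr μ (fun ω => ∀ i, ω i = false)) ∧
    ((∀ ω, 0 ≤ bernoulliProd (V := V) ε ω) ∧ (∑ ω, bernoulliProd (V := V) ε ω = 1) ∧
      IsAdmissible E ε (bernoulliProd ε) ∧
      Pr (bernoulliProd (V := V) ε) (fun ω => ∀ i, ω i = false) =
        (1 - ε) ^ Fintype.card V) := by
  classical
  have hsum1 : ∑ ω, bernoulliProd (V := V) ε ω = 1 := by
    unfold bernoulliProd
    rw [← Fintype.prod_sum (fun (i : V) (b : Bool) => if b then ε else 1 - ε)]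
    rw [Finset.prod_congr rfl fun i _ => by
      show (∑ b : Bool, if b then ε else 1 - ε) = 1
      simp]
    simp
  have huniv : Pr (bernoulliProd (V := V) ε) (fun ω => ∀ i, ω i = false) =
      (1 - ε) ^ Fintype.card V := by
    have := bern_cyl (V := V) ε ∅ Finset.univ (Finset.disjoint_empty_left _)
    simp only [Finset.card_empty, pow_zero, one_mul, Finset.card_univ] at this
    rw [← this]
    exact Pr_congr _ (by simp)
  refine ⟨?_, ?_, hsum1, ?_, huniv⟩
  · intro μ _ hsum hadm
    have := admissible_lower_bound E hacyclic ε hε1 μ hsum hadm Finset.univ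
    rw [Finset.card_univ] at this
    exact le_trans this (le_of_eq (Pr_congr μ (by simp)))
  · intro ω
    exact Finset.prod_nonneg fun i _ => by split <;> linarith
  · -- admissibility of the Bernoulli product
    intro i Y Y' hd hY hY' _
    have hiY : i ∉ Y := fun h => hY i h Relation.ReflTransGen.refl
    have hiY' : i ∉ Y' := fun h => hY' i h Relation.ReflTransGen.refl
    have hd' : Disjoint (insert i Y) Y' := by
      rw [Finset.insert_eq]
      exact Finset.disjoint_union_left.mpr ⟨by simpa using hiY', hd⟩
    have e1 : Pr (bernoulliProd (V := V) ε)
        (fun ω => ω i = true ∧ (∀ j ∈ Y, ω j = true) ∧ (∀ j ∈ Y', ω j = false)) =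
        Pr (bernoulliProd (V := V) ε)
        (fun ω => (∀ j ∈ insert i Y, ω j = true) ∧ (∀ j ∈ Y', ω j = false)) := by
      refine Pr_congr _ fun ω => ?_
      simp only [Finset.mem_insert, forall_eq_or_imp]
      tauto
    rw [e1, bern_cyl ε _ _ hd', bern_cyl ε _ _ hd, Finset.card_insert_of_notMem hiY]
    rw [pow_succ]
    exact le_of_eq (by ring)
end
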